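/- Let G be a finite simple loopless graph with at least one edge that admits a proper colouring with n colours (n ≥ 2). Then ind |Hom(K₂,G)| ≤ n−2; that is, there exists a continuous map g : |Hom(K₂,G)| → S^{n−2} such that g(α·x) = −g(x) for all x ∈ |Hom(K₂,G)|, where α·x is the involution induced by the flip involution of K₂. -/

import Mathlib

open Metric unitInterval

noncomputable section

/-- The unit sphere `S^k` in `ℝ^(k+1)`. -/
abbrev Sph (k : ℕ) : Type := Metric.sphere (0 : EuclideanSpace ℝ (Fin (k+1))) 1

/-- `φ` is a multihomomorphism from `G` to `H`. -/
def IsMultihom {V W : Type*} (G : SimpleGraph V) (H : SimpleGraph W)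
    (φ : V → Set W) : Prop :=
  (∀ v, (φ v).Nonempty) ∧ ∀ ⦃u v⦄, G.Adj u v → ∀ a ∈ φ u, ∀ b ∈ φ v, H.Adj a b

/-- The Hom space `|Hom(G,H)|`. -/
def HomSpace {V W : Type*} [Fintype W] (G : SimpleGraph V) (H : SimpleGraph W) : Type _ :=
  {x : V → stdSimplex ℝ W // IsMultihom G H fun v => {w | (x v : W → ℝ) w ≠ 0}}

instance {V W : Type*} [Fintype W] (G : SimpleGraph V) (H : SimpleGraph W) :
    TopologicalSpace (HomSpace G H) :=
  inferInstanceAs (TopologicalSpace {_x : V → stdSimplex ℝ W // _})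

/-- The map `|Hom(G,H)| → |Hom(G',H)|` induced by a graph homomorphism `κ : G' → G`;
for `G' = G` and `κ` an involution this is the induced (left) involution. -/
def pull {V V' W : Type*} [Fintype W] {G : SimpleGraph V} {G' : SimpleGraph V'}
    {H : SimpleGraph W} (κ : G' →g G) (x : HomSpace G H) : HomSpace G' H :=
  ⟨fun v => x.1 (κ v), fun v => x.2.1 (κ v), fun _ _ huv => x.2.2 (κ.map_adj huv)⟩

/-- The (right) involution of `|Hom(G,H)|` induced by an involution `β` of `H`. -/
def rightAct {V W : Type*} [Fintype W] {G : SimpleGraph V} {H : SimpleGraph W}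
    (β : H →g H) (hβ : Function.Involutive β) (x : HomSpace G H) : HomSpace G H :=
  ⟨fun v => ⟨fun b => (x.1 v : W → ℝ) (β b),
    fun b => (x.1 v).2.1 (β b),
    by
      rw [← (x.1 v).2.2]
      exact Fintype.sum_bijective β hβ.bijective _ _ fun b => rfl⟩,
   fun v => by
      obtain ⟨w, hw⟩ := x.2.1 v
      exact ⟨β w, by change (x.1 v : W → ℝ) (β (β w)) ≠ 0; simpa [hβ w] using hw⟩,
   fun u v huv a ha b hb => by
      have := x.2.2 huv (β a) ha (β b) hb
      simpa [hβ a, hβ b] using β.map_adj this⟩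

/-- The complete graph `K₂` on `{0,1}`. -/
abbrev K2 : SimpleGraph (Fin 2) := SimpleGraph.completeGraph (Fin 2)

/-- The flip involution of `K₂`. -/
def flipK2 : K2 →g K2 :=
  ⟨fun v => 1 - v, fun {a b} h => by fin_cases a <;> fin_cases b <;> simp_all⟩

/-- The cycle `C_m` on `ℤ/m`. -/
def cycle (m : ℕ) : SimpleGraph (ZMod m) where
  Adj u v := u ≠ v ∧ (u + 1 = v ∨ v + 1 = u)
  symm := ⟨fun _ _ h => ⟨h.1.symm, h.2.symm⟩⟩
  loopless := ⟨fun _ h => h.1 rfl⟩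

/-- The involution `v ↦ (m-1) - v = -1 - v` of the cycle `C_m`. -/
def cycFlip (m : ℕ) : cycle m →g cycle m :=
  ⟨fun v => -1 - v, fun {a b} h => by
    refine ⟨fun e => h.1 (sub_right_injective e), ?_⟩
    rcases h.2 with e | e
    · exact Or.inr (by rw [← e]; ring)
    · exact Or.inl (by rw [← e]; ring)⟩

/-- `X` is `m`-connected: nonempty, path-connected, and `πᵢ X` trivial for `1 ≤ i ≤ m`. -/
def MConnected (m : ℕ) (X : Type*) [TopologicalSpace X] : Prop :=
  Nonempty X ∧ PathConnectedSpace X ∧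
    ∀ i, 1 ≤ i → i ≤ m → ∀ x : X, Subsingleton (HomotopyGroup (Fin i) X x)

end

/-!
Push the two probability vectors `x(0)` and `x(1)` forward along an `n`-colouring `c` of `G`
and take their difference `d(x) ∈ ℝⁿ`. Since every vertex in the support of `x(0)` is adjacent
to every vertex in the support of `x(1)`, the two pushforwards have disjoint supports, so `d(x)`
is a nonzero vector with coordinate sum `0`; the flip swaps `x(0)` and `x(1)`, so `d` is odd.
Dropping the last coordinate embeds the sum-zero hyperplane into `ℝⁿ⁻¹`, and normalising gives
the required odd map to `Sⁿ⁻²`.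
-/

open Finset

theorem exists_odd_map_sphere {X E : Type*} [TopologicalSpace X] [NormedAddCommGroup E]
    [NormedSpace ℝ E] (τ : X → X) (f : X → E) (hf : Continuous f) (hf0 : ∀ x, f x ≠ 0)
    (hodd : ∀ x, f (τ x) = -f x) :
    ∃ g : X → sphere (0 : E) 1, Continuous g ∧ ∀ x, g (τ x) = -g x := by
  refine ⟨fun x => ⟨‖f x‖⁻¹ • f x, by simp [norm_smul, hf0 x]⟩, ?_, fun x => ?_⟩
  · exact ((hf.norm.inv₀ fun x => norm_ne_zero_iff.mpr (hf0 x)).smul hf).subtype_mk _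
  · ext1
    simp [hodd x]

theorem Fin.init_ne_zero_of_sum_eq_zero {M : Type*} [AddCommGroup M] {k : ℕ}
    {v : Fin (k + 1) → M} (hsum : ∑ i, v i = 0) (hv : v ≠ 0) : Fin.init v ≠ 0 := by
  intro hinit
  have hlast : v (Fin.last k) = 0 := by
    simpa [Fin.sum_univ_castSucc, ← Fin.init_def, hinit] using hsum
  refine hv (funext fun i => ?_)
  induction i using Fin.lastCases with
  | last => exact hlast
  | cast i => exact congrFun hinit i

section ColorDiff

variable {V α : Type*} [Fintype V] {G : SimpleGraph V} [DecidableEq α]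

def colorDiff (c : G.Coloring α) (x : HomSpace K2 G) (i : α) : ℝ :=
  ∑ v with c v = i, ((x.1 0 : V → ℝ) v - (x.1 1 : V → ℝ) v)

theorem continuous_colorDiff (c : G.Coloring α) : Continuous (colorDiff c) := by
  have hcoord (u : Fin 2) (v : V) : Continuous fun x : HomSpace K2 G => (x.1 u : V → ℝ) v :=
    (continuous_apply v).comp <| continuous_subtype_val.comp <|
      (continuous_apply u).comp continuous_subtype_val
  exact continuous_pi fun i =>
    continuous_finsetSum _ fun v _ => (hcoord 0 v).sub (hcoord 1 v)

theorem colorDiff_pull_flipK2 (c : G.Coloring α) (x : HomSpace K2 G) :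
    colorDiff c (pull flipK2 x) = -colorDiff c x := by
  funext i
  simp only [colorDiff, Pi.neg_apply, ← sum_neg_distrib, neg_sub]
  rfl

theorem sum_colorDiff [Fintype α] (c : G.Coloring α) (x : HomSpace K2 G) :
    ∑ i, colorDiff c x i = 0 := by
  simp only [colorDiff]
  rw [sum_fiberwise, sum_sub_distrib, stdSimplex.sum_eq_one, stdSimplex.sum_eq_one,
    sub_self]

theorem colorDiff_ne_zero (c : G.Coloring α) (x : HomSpace K2 G) : colorDiff c x ≠ 0 := by
  obtain ⟨a, ha⟩ := x.2.1 0
  have hfiber : ∀ v, c v = c a → (x.1 1 : V → ℝ) v = 0 := fun v hv => by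
    by_contra hb
    exact c.valid (x.2.2 (by simp : K2.Adj 0 1) a ha v hb) hv.symm
  have hpos : 0 < colorDiff c x (c a) := by
    refine sum_pos' (fun v hv => ?_) ⟨a, by simp, ?_⟩
    · rw [hfiber v (mem_filter.mp hv).2, sub_zero]
      exact stdSimplex.zero_le _ v
    · rw [hfiber a rfl, sub_zero]
      exact (stdSimplex.zero_le _ a).lt_of_ne' ha
  exact fun h => hpos.ne' (congrFun h (c a))

end ColorDiff

theorem hom_K2_index_le_of_colorable_general {V : Type*} [Fintype V] (G : SimpleGraph V)
    (n : ℕ) (hn : 2 ≤ n) (hc : G.Colorable n) :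
    ∃ g : HomSpace K2 G → Sph (n - 2), Continuous g ∧
      ∀ x, g (pull flipK2 x) = -(g x) := by
  obtain ⟨k, rfl⟩ : ∃ k, n = k + 2 := ⟨n - 2, by omega⟩
  obtain ⟨c⟩ := hc
  rw [Nat.add_sub_cancel]
  refine exists_odd_map_sphere (pull flipK2)
    (fun x => WithLp.toLp 2 (Fin.init (colorDiff c x))) ?_ (fun x => ?_) (fun x => ?_)
  · exact (PiLp.continuous_toLp 2 _).comp <|
      (continuous_pi fun i => continuous_apply _).comp (continuous_colorDiff c)
  · simpa using Fin.init_ne_zero_of_sum_eq_zero (sum_colorDiff c x) (colorDiff_ne_zero c x)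
  · rw [colorDiff_pull_flipK2]
    rfl

theorem hom_K2_index_le_of_colorable {V : Type*} [Fintype V] (G : SimpleGraph V)
    (hE : ∃ u v, G.Adj u v) (n : ℕ) (hn : 2 ≤ n) (hc : G.Colorable n) :
    ∃ g : HomSpace K2 G → Sph (n - 2), Continuous g ∧
      ∀ x, g (pull flipK2 x) = -(g x) :=
  hom_K2_index_le_of_colorable_general G n hn hc
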